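/- arXiv:2012.13288 — 4 statements merged into one kernel-verified Lean document; each statement's English description precedes it below -/
import Mathlib

section
/- Fix $t\in(0,1)$ and let $W_1,W_2,\dots$ be independent identically distributed random variables, each geometric with success parameter $t$ (so $P[W_j=k]=t(1-t)^k$ for integers $k\ge 0$). For $n\ge 1$ set $S_n = W_1+\dots+W_n$ and $\pi_n(t) = E\!\left[\frac{n}{n+S_n}\right]$. Then the sequence $n\mapsto \pi_n(t)$ is nonincreasing: $\pi_{n+1}(t)\le \pi_n(t)$ for all $n\ge 1$. -/
open MeasureTheory ProbabilityTheory Finset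

/-!
Write `S = W₀ + ⋯ + Wₙ`. The `n + 1` leave-one-out quantities `aⱼ = n + S - Wⱼ` add up to
`n (n + 1 + S)`, so the HM–AM inequality gives, pointwise,
`(n + 1) / (n + 1 + S) ≤ (n + 1)⁻¹ ∑ⱼ n / aⱼ`.
Each `S - Wⱼ` is a sum of `n` of the IID variables and so has the law of `Sₙ`; taking
expectations yields `π_{n+1} ≤ π_n`.
-/

lemma div_add_sum_le_mean_div_add_sum_erase {ι : Type*} [DecidableEq ι] (s : Finset ι) {n : ℕ}
    (hn : 0 < n) (hs : #s = n + 1) {w : ι → ℝ} (hw : ∀ i ∈ s, 0 ≤ w i) :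
    ((n : ℝ) + 1) / ((n + 1) + ∑ i ∈ s, w i)
      ≤ (∑ j ∈ s, (n : ℝ) / (n + ∑ i ∈ s.erase j, w i)) / (n + 1) := by
  set S := ∑ i ∈ s, w i
  have hn' : (0 : ℝ) < n := by exact_mod_cast hn
  have hS : 0 ≤ S := sum_nonneg hw
  have ha : ∀ j ∈ s, 0 < (n : ℝ) + ∑ i ∈ s.erase j, w i := fun j _ =>
    add_pos_of_pos_of_nonneg hn' (sum_nonneg fun i hi => hw i (mem_of_mem_erase hi))
  have hsum : ∑ j ∈ s, ((n : ℝ) + ∑ i ∈ s.erase j, w i) = n * ((n + 1) + S) := by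
    rw [sum_congr rfl fun j hj => by rw [sum_erase_eq_sub hj]]
    simp only [sum_add_distrib, sum_sub_distrib, sum_const, hs, nsmul_eq_mul]
    push_cast
    ring
  have hHM := sq_sum_div_le_sum_sq_div s (fun _ => (1 : ℝ)) ha
  simp only [sum_const, hs, nsmul_eq_mul, mul_one, one_pow, hsum] at hHM
  rw [div_le_iff₀ (by positivity)] at hHM
  rw [div_le_div_iff₀ (by positivity) (by positivity)]
  simp only [← mul_one_div (n : ℝ), ← mul_sum]
  push_cast at hHM
  linear_combination hHM

section

variable {Ω : Type*} [MeasurableSpace Ω] {P : Measure Ω}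

lemma identDistrib_of_measure_eq_singleton {α : Type*} [MeasurableSpace α] [Countable α]
    [MeasurableSingletonClass α] {X Y : Ω → α} (hX : Measurable X) (hY : Measurable Y)
    (h : ∀ k, P {ω | X ω = k} = P {ω | Y ω = k}) : IdentDistrib X Y P P where
  aemeasurable_fst := hX.aemeasurable
  aemeasurable_snd := hY.aemeasurable
  map_eq := Measure.ext_of_singleton fun k => by
    rw [Measure.map_apply hX (measurableSet_singleton k),
      Measure.map_apply hY (measurableSet_singleton k)]
    exact h k

lemma integrable_div_add_of_nonneg [IsFiniteMeasure P] {X : Ω → ℝ} (hX : Measurable X)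
    (hX0 : ∀ ω, 0 ≤ X ω) {c : ℝ} (hc : 0 < c) :
    Integrable (fun ω => c / (c + X ω)) P := by
  refine Integrable.of_bound
    (measurable_const.div (measurable_const.add hX)).aestronglyMeasurable 1 (ae_of_all _ fun ω => ?_)
  have := hX0 ω
  rw [Real.norm_of_nonneg (by positivity), div_le_one (by positivity)]
  linarith

variable {E : Type*} [AddCommMonoid E] [MeasurableSpace E] [MeasurableAdd₂ E] {W : ℕ → Ω → E}

lemma identDistrib_sum_map_perm (hindep : iIndepFun W P)
    (hid : ∀ i, IdentDistrib (W i) (W 0) P P) (σ : Equiv.Perm ℕ) (s : Finset ℕ) :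
    IdentDistrib (fun ω => ∑ i ∈ s.map σ.toEmbedding, W i ω) (fun ω => ∑ i ∈ s, W i ω) P P := by
  have hvec : IdentDistrib (fun ω i => W (σ i) ω) (fun ω i => W i ω) P P :=
    IdentDistrib.pi (fun i => (hid (σ i)).trans (hid i).symm) (hindep.precomp σ.injective) hindep
  simpa only [sum_map, Equiv.coe_toEmbedding, Function.comp_def] using
    hvec.comp (u := fun x : ℕ → E => ∑ i ∈ s, x i) (by fun_prop)

end

lemma map_swap_range_eq_erase {j n : ℕ} (hj : j ≤ n) :
    (range n).map (Equiv.swap j n).toEmbedding = (range (n + 1)).erase j := by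
  ext i
  simp only [mem_map_equiv, Equiv.symm_swap, Equiv.swap_apply_def, mem_range, mem_erase]
  split_ifs <;> omega

theorem stmt_3_general {Ω : Type*} [MeasurableSpace Ω] (P : Measure Ω) [IsProbabilityMeasure P]
    (t : ℝ)
    (W : ℕ → Ω → ℕ) (hmeas : ∀ j, Measurable (W j))
    (hindep : iIndepFun W P)
    (hgeom : ∀ j k, P {ω | W j ω = k} = ENNReal.ofReal (t * (1 - t) ^ k)) :
    ∀ n : ℕ, 1 ≤ n →
      (∫ ω, ((n : ℝ) + 1) / (((n : ℝ) + 1) + ∑ j ∈ Finset.range (n + 1), (W j ω : ℝ)) ∂P)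
        ≤ ∫ ω, (n : ℝ) / ((n : ℝ) + ∑ j ∈ Finset.range n, (W j ω : ℝ)) ∂P := by
  intro n hn
  set X : ℕ → Ω → ℝ := fun i ω => W i ω
  have hXindep : iIndepFun X P := hindep.comp _ fun _ => measurable_from_nat
  have hXid : ∀ i, IdentDistrib (X i) (X 0) P P := fun i =>
    (identDistrib_of_measure_eq_singleton (hmeas i) (hmeas 0) fun k => by
      rw [hgeom, hgeom]).comp measurable_from_nat
  have hint : ∀ c : ℝ, 0 < c → ∀ s : Finset ℕ,
      Integrable (fun ω => c / (c + ∑ i ∈ s, X i ω)) P := fun c hc s =>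
    integrable_div_add_of_nonneg (by fun_prop) (fun ω => sum_nonneg fun i _ => Nat.cast_nonneg _) hc
  have hn' : (0 : ℝ) < n := by exact_mod_cast hn
  have leave_one_out : ∀ j ∈ range (n + 1),
      ∫ ω, (n : ℝ) / (n + ∑ i ∈ (range (n + 1)).erase j, X i ω) ∂P
        = ∫ ω, (n : ℝ) / (n + ∑ i ∈ range n, X i ω) ∂P := fun j hj => by
    rw [← map_swap_range_eq_erase (mem_range_succ_iff.1 hj)]
    exact ((identDistrib_sum_map_perm hXindep hXid _ _).comp
      (u := fun x : ℝ => n / (n + x)) (by fun_prop)).integral_eq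
  calc _ ≤ ∫ ω, (∑ j ∈ range (n + 1), (n : ℝ) / (n + ∑ i ∈ (range (n + 1)).erase j, X i ω))
          / (n + 1) ∂P :=
        integral_mono (hint _ (by positivity) _)
          ((integrable_finsetSum _ fun j _ => hint _ hn' _).div_const _) fun ω =>
          div_add_sum_le_mean_div_add_sum_erase _ hn (card_range _) fun i _ => Nat.cast_nonneg _
    _ = _ := by
        rw [integral_div, integral_finsetSum _ fun j _ => hint _ hn' _, sum_congr rfl leave_one_out,
          sum_const, card_range, nsmul_eq_mul]
        push_cast
        exact mul_div_cancel_left₀ _ (by positivity)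

/-- If `W₁, W₂, …` are IID geometric(`t`) random variables (`P[W_j = k] = t(1-t)^k`) and
`S_n = W₁ + ⋯ + W_n`, then `π_n(t) = E[n/(n+S_n)]` is nonincreasing in `n ≥ 1`. -/
theorem stmt_3 {Ω : Type*} [MeasurableSpace Ω] (P : Measure Ω) [IsProbabilityMeasure P]
    (t : ℝ) (ht : t ∈ Set.Ioo (0 : ℝ) 1)
    (W : ℕ → Ω → ℕ) (hmeas : ∀ j, Measurable (W j))
    (hindep : iIndepFun W P)
    (hgeom : ∀ j k, P {ω | W j ω = k} = ENNReal.ofReal (t * (1 - t) ^ k)) :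
    ∀ n : ℕ, 1 ≤ n →
      (∫ ω, ((n : ℝ) + 1) / (((n : ℝ) + 1) + ∑ j ∈ Finset.range (n + 1), (W j ω : ℝ)) ∂P)
        ≤ ∫ ω, (n : ℝ) / ((n : ℝ) + ∑ j ∈ Finset.range n, (W j ω : ℝ)) ∂P :=
  stmt_3_general P t W hmeas hindep hgeom
end

section
/- Let $n\ge 1$ be an integer. The function $t\mapsto \pi_n(t) := n\int_0^1 z^{n-1}\left(\frac{t}{1-z(1-t)}\right)^{n} dz$ is strictly increasing on $(0,1)$, with $\lim_{t\uparrow 1}\pi_n(t)=1$. -/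
/-!
Write `recordProb n t = n ∫₀¹ z^(n-1) q_z(t)^n dz` with `q_z(t) = t / (1 - z (1 - t))`. Each `q_z`
with `0 ≤ z < 1` is strictly increasing in `t`, hence so is `recordProb n`. For `0 < t ≤ 1` one
has `t ≤ q_z(t) ≤ 1`, so comparing with `n ∫₀¹ z^(n-1) dz = 1` squeezes
`t ^ n ≤ recordProb n t ≤ 1`, which forces the limit `1` as `t ↑ 1`.
-/

open Set Filter Topology MeasureTheory intervalIntegral

noncomputable def recordProb (n : ℕ) (t : ℝ) : ℝ :=
  n * ∫ z in (0 : ℝ)..1, z ^ (n - 1) * (t / (1 - z * (1 - t))) ^ n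

section Quotient

variable {t z : ℝ}

lemma one_sub_mul_one_sub_pos (ht : 0 < t) (hz₀ : 0 ≤ z) (hz₁ : z ≤ 1) :
    0 < 1 - z * (1 - t) := by
  nlinarith [mul_nonneg hz₀ ht.le]

lemma le_div_one_sub_mul_one_sub (ht₀ : 0 < t) (ht₁ : t ≤ 1) (hz₀ : 0 ≤ z) (hz₁ : z ≤ 1) :
    t ≤ t / (1 - z * (1 - t)) := by
  have hd := one_sub_mul_one_sub_pos ht₀ hz₀ hz₁
  rw [le_div_iff₀ hd]
  nlinarith [mul_nonneg hz₀ (sub_nonneg.2 ht₁)]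

lemma div_one_sub_mul_one_sub_le_one (ht₀ : 0 < t) (ht₁ : t ≤ 1) (hz₀ : 0 ≤ z) (hz₁ : z ≤ 1) :
    t / (1 - z * (1 - t)) ≤ 1 := by
  rw [div_le_one (one_sub_mul_one_sub_pos ht₀ hz₀ hz₁)]
  nlinarith [mul_nonneg (sub_nonneg.2 hz₁) (sub_nonneg.2 ht₁)]

lemma strictMonoOn_div_one_sub_mul_one_sub (hz₀ : 0 ≤ z) (hz₁ : z < 1) :
    StrictMonoOn (fun t : ℝ => t / (1 - z * (1 - t))) (Ioi 0) := by
  intro t₁ ht₁ t₂ ht₂ h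
  rw [div_lt_div_iff₀ (one_sub_mul_one_sub_pos ht₁ hz₀ hz₁.le)
    (one_sub_mul_one_sub_pos ht₂ hz₀ hz₁.le)]
  nlinarith [mul_pos (sub_pos.2 h) (sub_pos.2 hz₁)]

end Quotient

lemma intervalIntegrable_recordProb_integrand (n : ℕ) {t : ℝ} (ht : 0 < t) :
    IntervalIntegrable (fun z : ℝ => z ^ (n - 1) * (t / (1 - z * (1 - t))) ^ n) volume 0 1 := by
  refine ContinuousOn.intervalIntegrable_of_Icc zero_le_one ?_
  refine (continuousOn_pow _).mul ((continuousOn_const.div (by fun_prop) ?_).pow _)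
  exact fun z hz => (one_sub_mul_one_sub_pos ht hz.1 hz.2).ne'

lemma natCast_mul_integral_pow_pred {n : ℕ} (hn : 1 ≤ n) :
    (n : ℝ) * ∫ z in (0 : ℝ)..1, z ^ (n - 1) = 1 := by
  rw [integral_pow, Nat.sub_add_cancel hn, Nat.cast_sub hn]
  have : (n : ℝ) ≠ 0 := by positivity
  simp [zero_pow (Nat.one_le_iff_ne_zero.1 hn), this]

lemma strictMonoOn_recordProb {n : ℕ} (hn : 1 ≤ n) : StrictMonoOn (recordProb n) (Ioi 0) := by
  intro t₁ ht₁ t₂ ht₂ h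
  refine mul_lt_mul_of_pos_left ?_ (by positivity)
  rw [← sub_pos, ← integral_sub (intervalIntegrable_recordProb_integrand n ht₂)
    (intervalIntegrable_recordProb_integrand n ht₁)]
  refine intervalIntegral_pos_of_pos_on ((intervalIntegrable_recordProb_integrand n ht₂).sub
    (intervalIntegrable_recordProb_integrand n ht₁)) (fun z hz => ?_) zero_lt_one
  have hq := strictMonoOn_div_one_sub_mul_one_sub hz.1.le hz.2 ht₁ ht₂ h
  have hq₀ : 0 ≤ t₁ / (1 - z * (1 - t₁)) :=
    div_nonneg ht₁.le (one_sub_mul_one_sub_pos ht₁ hz.1.le hz.2.le).le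
  rw [sub_pos, mul_lt_mul_iff_right₀ (pow_pos hz.1 _)]
  exact pow_lt_pow_left₀ hq hq₀ (by omega)

lemma pow_le_recordProb_le_one {n : ℕ} (hn : 1 ≤ n) {t : ℝ} (ht₀ : 0 < t) (ht₁ : t ≤ 1) :
    t ^ n ≤ recordProb n t ∧ recordProb n t ≤ 1 := by
  have hint := intervalIntegrable_recordProb_integrand n ht₀
  have hpow : IntervalIntegrable (fun z : ℝ => z ^ (n - 1)) volume 0 1 :=
    (continuous_pow _).intervalIntegrable _ _
  have hbounds : ∀ z ∈ Icc (0 : ℝ) 1, z ^ (n - 1) * t ^ n ≤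
      z ^ (n - 1) * (t / (1 - z * (1 - t))) ^ n ∧
      z ^ (n - 1) * (t / (1 - z * (1 - t))) ^ n ≤ z ^ (n - 1) := fun z hz => by
    have hz' : 0 ≤ z ^ (n - 1) := pow_nonneg hz.1 _
    refine ⟨mul_le_mul_of_nonneg_left ?_ hz', mul_le_of_le_one_right hz' ?_⟩
    · exact pow_le_pow_left₀ ht₀.le (le_div_one_sub_mul_one_sub ht₀ ht₁ hz.1 hz.2) n
    · exact pow_le_one₀ (div_nonneg ht₀.le (one_sub_mul_one_sub_pos ht₀ hz.1 hz.2).le)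
        (div_one_sub_mul_one_sub_le_one ht₀ ht₁ hz.1 hz.2)
  have hn₀ : (0 : ℝ) ≤ n := n.cast_nonneg
  constructor
  · calc t ^ n = (n : ℝ) * ∫ z in (0 : ℝ)..1, z ^ (n - 1) * t ^ n := by
          rw [intervalIntegral.integral_mul_const, ← mul_assoc, natCast_mul_integral_pow_pred hn, one_mul]
      _ ≤ recordProb n t := mul_le_mul_of_nonneg_left
          (integral_mono_on zero_le_one (hpow.mul_const _) hint fun z hz => (hbounds z hz).1) hn₀
  · calc recordProb n t ≤ (n : ℝ) * ∫ z in (0 : ℝ)..1, z ^ (n - 1) := mul_le_mul_of_nonneg_left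
          (integral_mono_on zero_le_one hint hpow fun z hz => (hbounds z hz).2) hn₀
      _ = 1 := natCast_mul_integral_pow_pred hn

lemma tendsto_recordProb_nhdsLT_one {n : ℕ} (hn : 1 ≤ n) :
    Tendsto (recordProb n) (𝓝[<] 1) (𝓝 1) := by
  have hpow : Tendsto (fun t : ℝ => t ^ n) (𝓝[<] 1) (𝓝 1) := by
    simpa using ((continuous_pow n : Continuous fun t : ℝ => t ^ n).tendsto 1).mono_left nhdsWithin_le_nhds
  refine tendsto_of_tendsto_of_tendsto_of_le_of_le' hpow tendsto_const_nhds ?_ ?_ <;>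
  filter_upwards [Ioo_mem_nhdsLT zero_lt_one] with t ht
  exacts [(pow_le_recordProb_le_one hn ht.1 ht.2.le).1, (pow_le_recordProb_le_one hn ht.1 ht.2.le).2]

/-- For every integer `n ≥ 1`, the function
`t ↦ π_n(t) = n ∫_0^1 z^{n-1} (t/(1-z(1-t)))^n dz` is strictly increasing on `(0,1)`
and tends to `1` as `t ↑ 1`. -/
theorem stmt_5 (n : ℕ) (hn : 1 ≤ n) :
    StrictMonoOn
      (fun t : ℝ => (n : ℝ) * ∫ z in (0 : ℝ)..1, z ^ (n - 1) * (t / (1 - z * (1 - t))) ^ n)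
      (Set.Ioo 0 1) ∧
    Filter.Tendsto
      (fun t : ℝ => (n : ℝ) * ∫ z in (0 : ℝ)..1, z ^ (n - 1) * (t / (1 - z * (1 - t))) ^ n)
      (nhdsWithin 1 (Set.Iio 1)) (nhds 1) :=
  ⟨(strictMonoOn_recordProb hn).mono Ioo_subset_Ioi_self, tendsto_recordProb_nhdsLT_one hn⟩
end

section
/- Let $p=e^{-1}$ and $q=1-e^{-1}$. Then $\tilde\pi_1(-1)-V_1(-1) = \frac{p}{2q}\Bigl[-2\log(1-q)-\bigl(\log(1-q)\bigr)^{2}\Bigr] = \frac{p}{2q} = \frac{1}{2(e-1)} > 0$; equivalently $\tilde\pi_1(-1) = 2\,V_1(-1)$. Consequently the quantity $-\frac{p}{q}\log(1-q)$ strictly exceeds $\frac{p}{2q}(\log(1-q))^{2}$ at $q=1-e^{-1}$. -/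
/-! Both series are closed forms built from `-log (1 - x) = ∑ xⁿ⁺¹/(n+1)`: the first is this series
divided by `x`, and the second is half its Cauchy square divided by `x`, because the partial fraction
`1/((i+1)(j+1)) = (1/(i+1) + 1/(j+1))/(n+2)` on `i + j = n` turns the convolution coefficients into
harmonic numbers. At `x = 1 - e⁻¹` we have `log (1 - x) = -1`, so the two values are `p/q` and `p/(2q)`. -/

open Finset Real

lemma sum_range_one_div_succ (n : ℕ) :
    ∑ k ∈ range n, (1 : ℝ) / (k + 1) = ∑ j ∈ Icc 1 n, (1 : ℝ) / j := by
  induction n with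
  | zero => simp
  | succ n ih => rw [sum_range_succ, ih, sum_Icc_succ_top (by omega)]; push_cast; rfl

lemma sum_antidiagonal_one_div_mul (n : ℕ) :
    ∑ ij ∈ antidiagonal n, (1 : ℝ) / ((ij.1 + 1) * (ij.2 + 1)) =
      2 / (n + 2) * ∑ j ∈ Icc 1 (n + 1), (1 : ℝ) / j := by
  have partial_fractions : ∀ ij ∈ antidiagonal n, (1 : ℝ) / ((ij.1 + 1) * (ij.2 + 1)) =
      1 / (n + 2) * (1 / (ij.1 + 1) + 1 / (ij.2 + 1)) := by
    rintro ⟨i, j⟩ hij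
    rw [Finset.HasAntidiagonal.mem_antidiagonal] at hij
    have hn : (n : ℝ) + 2 = (i + 1) + (j + 1) := by rw [← hij]; push_cast; ring
    rw [hn]
    field_simp
    ring
  have swap : ∑ ij ∈ antidiagonal n, (1 : ℝ) / (ij.2 + 1) =
      ∑ ij ∈ antidiagonal n, (1 : ℝ) / (ij.1 + 1) :=
    Nat.sum_antidiagonal_swap (f := fun ij => (1 : ℝ) / (ij.1 + 1)) ▸ rfl
  rw [sum_congr rfl partial_fractions, ← mul_sum, sum_add_distrib, swap,
    Nat.sum_antidiagonal_eq_sum_range_succ_mk, sum_range_one_div_succ]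
  ring

lemma summable_norm_pow_succ_div {x : ℝ} (h : |x| < 1) :
    Summable fun n : ℕ => ‖x ^ (n + 1) / (n + 1)‖ := by
  refine (hasSum_pow_div_log_of_abs_lt_one ((abs_abs x).symm ▸ h)).summable.congr fun n => ?_
  rw [norm_div, norm_pow, norm_eq_abs, norm_eq_abs, abs_of_pos (Nat.cast_add_one_pos (α := ℝ) n)]

theorem hasSum_log_one_sub_sq {x : ℝ} (h : |x| < 1) :
    HasSum (fun n : ℕ => 2 * x ^ (n + 2) / (n + 2) * ∑ j ∈ Icc 1 (n + 1), (1 : ℝ) / j)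
      (log (1 - x) ^ 2) := by
  set f : ℕ → ℝ := fun n => x ^ (n + 1) / (n + 1)
  have hf := summable_norm_pow_succ_div h
  have cauchy := (summable_norm_sum_mul_antidiagonal_of_summable_norm hf hf).of_norm.hasSum
  rw [← tsum_mul_tsum_eq_tsum_sum_antidiagonal_of_summable_norm hf hf,
    (hasSum_pow_div_log_of_abs_lt_one h).tsum_eq, neg_mul_neg, ← sq] at cauchy
  refine cauchy.congr_fun fun n => ?_
  have hterm : ∀ ij ∈ antidiagonal n, f ij.1 * f ij.2 =
      x ^ (n + 2) * ((1 : ℝ) / ((ij.1 + 1) * (ij.2 + 1))) := by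
    rintro ⟨i, j⟩ hij
    rw [Finset.HasAntidiagonal.mem_antidiagonal] at hij
    simp only [f, ← hij]
    field_simp
    ring
  rw [sum_congr rfl hterm, ← mul_sum, sum_antidiagonal_one_div_mul]
  ring

theorem hasSum_pow_mul_div_one_add {x : ℝ} (h : |x| < 1) (hx : x ≠ 0) (c : ℝ) :
    HasSum (fun k : ℕ => x ^ k * c / (1 + k)) (-(c / x) * log (1 - x)) := by
  have hlog := (hasSum_pow_div_log_of_abs_lt_one h).mul_left (c / x)
  rw [mul_neg, ← neg_mul] at hlog
  exact hlog.congr_fun fun k => by field_simp; ring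

theorem hasSum_pow_succ_mul_div_mul_sum_Icc {x : ℝ} (h : |x| < 1) (hx : x ≠ 0) (c : ℝ) :
    HasSum (fun k : ℕ => x ^ (k + 1) * c / (1 + (k + 1)) * ∑ j ∈ Icc 1 (k + 1), (1 : ℝ) / j)
      (c / (2 * x) * log (1 - x) ^ 2) := by
  refine ((hasSum_log_one_sub_sq h).mul_left (c / (2 * x))).congr_fun fun k => ?_
  field_simp
  ring

/-- With `p = e⁻¹`, `q = 1 - e⁻¹`, `π̃₁ = ∑_{k≥0} q^k p/(1+k)` and
`V₁ = ∑_{k≥1} (q^k p/(1+k)) ∑_{j=1}^k 1/j`, we have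
`π̃₁ - V₁ = (p/2q)[-2 log(1-q) - (log(1-q))²] = p/(2q) = 1/(2(e-1)) > 0`;
equivalently `π̃₁ = 2 V₁`, and `-(p/q) log(1-q)` strictly exceeds `(p/2q)(log(1-q))²`. -/
theorem stmt_10 (p q : ℝ) (hp : p = Real.exp (-1)) (hq : q = 1 - p)
    (pi1 V1 : ℝ)
    (hpi1 : pi1 = ∑' k : ℕ, q ^ k * p / (1 + k))
    (hV1 : V1 = ∑' k : ℕ, q ^ (k + 1) * p / (1 + (k + 1)) *
        ∑ j ∈ Finset.Icc 1 (k + 1), (1 : ℝ) / j) :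
    pi1 - V1 = p / (2 * q) * (-2 * Real.log (1 - q) - Real.log (1 - q) ^ 2) ∧
    pi1 - V1 = p / (2 * q) ∧
    pi1 - V1 = 1 / (2 * (Real.exp 1 - 1)) ∧
    0 < pi1 - V1 ∧
    pi1 = 2 * V1 ∧
    p / (2 * q) * Real.log (1 - q) ^ 2 < -(p / q) * Real.log (1 - q) := by
  have hp0 : 0 < p := hp ▸ exp_pos _
  have hp1 : p < 1 := by rw [hp, exp_lt_one_iff]; norm_num
  have hq0 : 0 < q := by linarith
  have hq1 : |q| < 1 := abs_lt.mpr ⟨by linarith, by linarith⟩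
  have hlog : log (1 - q) = -1 := by rw [hq, sub_sub_cancel, hp, log_exp]
  have hpi1_eq : pi1 = p / q := by
    rw [hpi1, (hasSum_pow_mul_div_one_add hq1 hq0.ne' p).tsum_eq, hlog]
    ring
  have hV1_eq : V1 = p / (2 * q) := by
    rw [hV1, (hasSum_pow_succ_mul_div_mul_sum_Icc hq1 hq0.ne' p).tsum_eq, hlog]
    ring
  have hdiff : pi1 - V1 = p / (2 * q) := by
    rw [hpi1_eq, hV1_eq]
    field_simp
    ring
  refine ⟨by rw [hdiff, hlog]; ring, hdiff, ?_, hdiff ▸ by positivity,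
    by rw [hpi1_eq, hV1_eq]; field_simp, ?_⟩
  · rw [hdiff, hq, hp, exp_neg]
    have he : 1 < exp 1 := one_lt_exp_iff.mpr one_pos
    field_simp
  · rw [hlog]
    have : p / (2 * q) < p / q := div_lt_div_of_pos_left hp0 hq0 (by linarith)
    linarith
end

section
/- Let $n\ge 1$ and $y\ge 1$ be integers, and consider a uniformly random permutation of $n+y$ distinctly ranked items, arranged in arrival order. Conditionally on the event that the best item is among the last $y$ positions, the probability that the first item among the last $y$ positions which is better than all of the first $n$ items is the best item overall equals $\frac{1}{y}\sum_{j=1}^{y}\frac{n}{n+j-1}$. -/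
/-!
Condition on the position `p ≥ n` of the best item. The threshold rule then accepts the best item
iff the best of the first `p` items is among the first `n`. Composing with the transposition of two
positions before `p` shows that the best of the first `p` items is equally likely to sit at each of
them, so this happens for a fraction `n / p` of the permutations. The best item is equally likely
to sit at each of the `y` late positions `p = n + j - 1`, and averaging gives the formula.
-/

open Finset Equiv

section Symmetry

variable {α : Type*}

lemma card_perm_symm_apply_eq [Fintype α] [DecidableEq α] (b p q : α) :
    #{σ : Perm α | σ.symm b = p} = #{σ : Perm α | σ.symm b = q} := by
  refine card_nbij' (· * swap p q) (· * swap p q) ?_ ?_ ?_ ?_ <;>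
    intro σ <;> simp +contextual [symm_apply_eq, mul_assoc]

lemma symm_mul_swap_apply_of_ne [DecidableEq α] {σ : Perm α} {b p m m' : α} (hm : p ≠ m)
    (hm' : p ≠ m') (h : σ.symm b = p) : (σ * swap m m').symm b = p := by
  rw [symm_apply_eq] at h ⊢
  rw [h, Perm.coe_mul, Function.comp_apply, swap_apply_of_ne_of_ne hm hm']

lemma isMinOn_comp_swap {β : Type*} [DecidableEq α] [Preorder β] {f : α → β} {s : Set α}
    {m m' : α} (hm : m ∈ s) (hm' : m' ∈ s) (h : IsMinOn f s m) :
    IsMinOn (f ∘ swap m m') s m' := by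
  intro x hx
  simp only [Set.mem_ofPred_eq, Function.comp_apply, swap_apply_right]
  apply h
  by_cases hxm : x = m
  · simpa [hxm] using hm'
  by_cases hxm' : x = m'
  · simpa [hxm'] using hm
  simpa [swap_apply_of_ne_of_ne hxm hxm'] using hx

variable [Fintype α] [LinearOrder α] {s t : Finset α} {b p : α}

open scoped Classical in
lemma card_isMinOn_eq {m m' : α} (hp : p ∉ s) (hm : m ∈ s) (hm' : m' ∈ s) :
    #{σ : Perm α | σ.symm b = p ∧ IsMinOn σ s m} =
      #{σ : Perm α | σ.symm b = p ∧ IsMinOn σ s m'} := by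
  have hpm := (ne_of_mem_of_not_mem hm hp).symm
  have hpm' := (ne_of_mem_of_not_mem hm' hp).symm
  refine card_nbij' (· * swap m m') (· * swap m m') ?_ ?_ ?_ ?_
  · intro σ hσ
    simp only [coe_filter, mem_univ, true_and, Set.mem_ofPred_eq] at hσ ⊢
    exact ⟨symm_mul_swap_apply_of_ne hpm hpm' hσ.1, isMinOn_comp_swap hm hm' hσ.2⟩
  · intro σ hσ
    simp only [coe_filter, mem_univ, true_and, Set.mem_ofPred_eq] at hσ ⊢
    rw [swap_comm]
    exact ⟨symm_mul_swap_apply_of_ne hpm' hpm hσ.1, isMinOn_comp_swap hm' hm hσ.2⟩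
  all_goals intro σ _; simp [mul_assoc]

open scoped Classical in
lemma card_exists_isMinOn_mul_card (hts : t ⊆ s) (hp : p ∉ s) :
    #{σ : Perm α | σ.symm b = p ∧ ∃ m ∈ t, IsMinOn σ s m} * #s =
      #t * #{σ : Perm α | σ.symm b = p} := by
  obtain rfl | ⟨m₀, hm₀⟩ := s.eq_empty_or_nonempty
  · simp [subset_empty.mp hts]
  have hcard : ∀ u ⊆ s, #{σ : Perm α | σ.symm b = p ∧ ∃ m ∈ u, IsMinOn σ s m} =
      #u * #{σ : Perm α | σ.symm b = p ∧ IsMinOn σ s m₀} := by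
    intro u hus
    have hunion : ({σ : Perm α | σ.symm b = p ∧ ∃ m ∈ u, IsMinOn σ s m} : Finset _) =
        u.biUnion fun m => {σ : Perm α | σ.symm b = p ∧ IsMinOn σ s m} := by
      ext σ
      simp only [mem_filter, mem_univ, true_and, mem_biUnion]
      aesop
    rw [hunion, card_biUnion, sum_const_nat fun m hm => card_isMinOn_eq hp (hus hm) hm₀]
    intro m hm m' hm' hne
    refine disjoint_left.mpr fun σ h h' => hne ?_
    simp only [mem_filter, mem_univ, true_and] at h h'
    exact σ.injective (le_antisymm (h.2 (hus hm')) (h'.2 (hus hm)))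
  have hexists : ({σ : Perm α | σ.symm b = p ∧ ∃ m ∈ s, IsMinOn σ s m} : Finset _) =
      ({σ : Perm α | σ.symm b = p} : Finset _) :=
    filter_congr fun σ _ => and_iff_left (s.exists_min_image σ ⟨m₀, hm₀⟩)
  rw [hcard t hts, ← hexists, hcard s subset_rfl]
  ring

end Symmetry

section Threshold

variable {N : ℕ}

-- Reducible, so that `rw` recognises the unfolded event of the theorem.
abbrev IsCandidate (n : ℕ) (σ : Perm (Fin N)) (i : Fin N) : Prop :=
  n ≤ (i : ℕ) ∧ ∀ j : Fin N, (j : ℕ) < n → σ i < σ j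

abbrev FirstCandidateIsBest (n : ℕ) (b : Fin N) (σ : Perm (Fin N)) : Prop :=
  ∃ i, IsCandidate n σ i ∧ (∀ i', IsCandidate n σ i' → i ≤ i') ∧ σ i = b

lemma firstCandidateIsBest_iff {n : ℕ} {b : Fin N} {σ : Perm (Fin N)} (hn : 1 ≤ n)
    (hb : IsBot b) (hp : n ≤ (σ.symm b : ℕ)) :
    FirstCandidateIsBest n b σ ↔
      ∃ m ∈ ({m | (m : ℕ) < n} : Finset (Fin N)), IsMinOn σ (Iio (σ.symm b)) m := by
  constructor
  · rintro ⟨i, -, hfirst, rfl⟩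
    rw [symm_apply_apply] at hp ⊢
    obtain ⟨m, hm, hmin⟩ := (Iio i).exists_min_image σ
      ⟨⟨0, by omega⟩, mem_Iio.2 (Fin.lt_def.2 (by simp only; omega))⟩
    refine ⟨m, mem_filter.2 ⟨mem_univ _, not_le.1 fun hnm => ?_⟩, hmin⟩
    have hm_candidate : IsCandidate n σ m := ⟨hnm, fun j hj =>
      lt_of_le_of_ne (hmin j (mem_Iio.2 (Fin.lt_def.2 (by omega))))
        (σ.injective.ne (Fin.ne_of_val_ne (by omega)))⟩
    exact (mem_Iio.1 hm).not_ge (hfirst m hm_candidate)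
  · rintro ⟨m, hm, hmin⟩
    have hmn : (m : ℕ) < n := (mem_filter.1 hm).2
    refine ⟨σ.symm b, ⟨hp, fun j hj => ?_⟩, fun i ⟨_, hi⟩ => ?_, σ.apply_symm_apply b⟩
    · rw [apply_symm_apply]
      exact lt_of_le_of_ne (hb _) fun h => by
        rw [← symm_apply_eq] at h
        omega
    · by_contra! hlt
      exact (hi m hmn).not_ge (hmin (mem_Iio.2 hlt))

lemma card_firstCandidateIsBest_mul {n : ℕ} {b p : Fin N} (hn : 1 ≤ n) (hb : IsBot b)
    (hp : n ≤ (p : ℕ)) :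
    #{σ : Perm (Fin N) | FirstCandidateIsBest n b σ ∧ σ.symm b = p} * p =
      n * #{σ : Perm (Fin N) | σ.symm b = p} := by
  classical
  have hevent :
      ({σ : Perm (Fin N) | FirstCandidateIsBest n b σ ∧ σ.symm b = p} : Finset _) =
      ({σ : Perm (Fin N) | σ.symm b = p ∧
        ∃ m ∈ ({m | (m : ℕ) < n} : Finset (Fin N)), IsMinOn σ (Iio p) m} : Finset _) := by
    refine filter_congr fun σ _ => ⟨fun ⟨h, hσ⟩ => ⟨hσ, ?_⟩, fun ⟨hσ, h⟩ => ⟨?_, hσ⟩⟩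
    · exact hσ ▸ (firstCandidateIsBest_iff hn hb (hσ ▸ hp)).1 h
    · exact (firstCandidateIsBest_iff hn hb (hσ ▸ hp)).2 (hσ ▸ h)
  have hsub : ({m | (m : ℕ) < n} : Finset (Fin N)) ⊆ Iio p := fun m hm =>
    mem_Iio.2 (Fin.lt_def.2 (lt_of_lt_of_le (mem_filter.1 hm).2 hp))
  have hcard := card_exists_isMinOn_mul_card (b := b) hsub (by simp : p ∉ Iio p)
  rw [Fin.card_Iio, Fin.card_filter_val_lt, min_eq_right (by omega)] at hcard
  rw [hevent]
  -- the two sides differ only in the `DecidableEq (Fin N)` instance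
  convert hcard

end Threshold

lemma card_filter_and_comp_eq_sum {ι κ : Type*} [Fintype ι] [Fintype κ] [DecidableEq κ]
    (P : ι → Prop) [DecidablePred P] (Q : κ → Prop) [DecidablePred Q] (f : ι → κ) :
    #{i | P i ∧ Q (f i)} = ∑ k with Q k, #{i | P i ∧ f i = k} := by
  rw [card_eq_sum_card_fiberwise (f := f) (t := {k | Q k}) fun i hi => by simp_all]
  refine sum_congr rfl fun k hk => ?_
  rw [filter_filter]
  refine congrArg card (filter_congr fun i _ => ?_)
  simp only [mem_filter, mem_univ, true_and] at hk
  exact ⟨fun ⟨⟨hP, _⟩, hf⟩ => ⟨hP, hf⟩, fun ⟨hP, hf⟩ => ⟨⟨hP, hf ▸ hk⟩, hf⟩⟩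

lemma sum_fin_filter_le_eq_sum_Icc {M : Type*} [AddCommMonoid M] (n y : ℕ) (g : ℕ → M) :
    ∑ p ∈ ({p | n ≤ (p : ℕ)} : Finset (Fin (n + y))), g p = ∑ j ∈ Icc 1 y, g (n + j - 1) := by
  refine sum_bij' (fun (p : Fin (n + y)) _ => (p : ℕ) + 1 - n)
    (fun j hj => ⟨n + j - 1, by rw [mem_Icc] at hj; omega⟩) ?_ ?_ ?_ ?_ ?_
  · intro p hp
    rw [mem_filter] at hp
    rw [mem_Icc]; omega
  · intro j hj
    rw [mem_Icc] at hj
    exact mem_filter.2 ⟨mem_univ _, by simp only; omega⟩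
  · intro p hp
    rw [mem_filter] at hp
    ext; simp only; omega
  · intro j hj
    rw [mem_Icc] at hj
    simp only; omega
  · intro p hp
    rw [mem_filter] at hp
    congr 1; omega

lemma card_filter_le_symm_apply (n y : ℕ) (b : Fin (n + y)) :
    #{σ : Perm (Fin (n + y)) | n ≤ (σ.symm b : ℕ)} =
      y * #{σ : Perm (Fin (n + y)) | σ.symm b = b} := by
  have h := card_filter_and_comp_eq_sum (fun _ => True) (fun p : Fin (n + y) => n ≤ (p : ℕ))
    fun σ : Perm (Fin (n + y)) => σ.symm b
  simp only [true_and] at h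
  rw [h, sum_congr rfl fun p _ => card_perm_symm_apply_eq b p b, sum_const, smul_eq_mul,
    card_eq_sum_ones, sum_fin_filter_le_eq_sum_Icc n y fun _ => 1, sum_const, Nat.card_Icc,
    smul_eq_mul, mul_one, add_tsub_cancel_right]

/-- Uniform random permutation of `n+y` distinctly ranked items (position `i` carries rank
`σ i`, rank `0` being best). Conditionally on the best item being among the last `y`
positions, the probability that the first candidate among the last `y` positions (an item
better than all of the first `n` items) is the best overall equals
`(1/y) ∑_{j=1}^y n/(n+j-1)`. -/
theorem stmt_11 (n y : ℕ) (hn : 1 ≤ n) :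
    (Nat.card {σ : Equiv.Perm (Fin (n + y)) //
        (∃ i : Fin (n + y),
          ((n ≤ (i : ℕ) ∧ ∀ j : Fin (n + y), (j : ℕ) < n → σ i < σ j) ∧
            (∀ i' : Fin (n + y),
              (n ≤ (i' : ℕ) ∧ ∀ j : Fin (n + y), (j : ℕ) < n → σ i' < σ j) → i ≤ i') ∧
            σ i = ⟨0, by omega⟩)) ∧
        n ≤ ((σ.symm ⟨0, by omega⟩ : Fin (n + y)) : ℕ)} : ℝ) /
      (Nat.card {σ : Equiv.Perm (Fin (n + y)) //
        n ≤ ((σ.symm ⟨0, by omega⟩ : Fin (n + y)) : ℕ)} : ℝ)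
    = (1 / (y : ℝ)) * ∑ j ∈ Finset.Icc 1 y, (n : ℝ) / ((n : ℝ) + (j : ℝ) - 1) := by
  set b : Fin (n + y) := ⟨0, by omega⟩
  have hb : IsBot b := fun j => Nat.zero_le j
  set c := #{σ : Perm (Fin (n + y)) | σ.symm b = b}
  have hc : (c : ℝ) ≠ 0 :=
    Nat.cast_ne_zero.2 (card_ne_zero.2 ⟨1, mem_filter.2 ⟨mem_univ _, rfl⟩⟩)
  have hfiber (p : Fin (n + y)) (hp : n ≤ (p : ℕ)) :
      (#{σ : Perm (Fin (n + y)) | FirstCandidateIsBest n b σ ∧ σ.symm b = p} : ℝ) =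
        n / (p : ℕ) * c := by
    have h := card_firstCandidateIsBest_mul hn hb hp
    rw [card_perm_symm_apply_eq b p b] at h
    rw [div_mul_eq_mul_div, eq_div_iff (Nat.cast_ne_zero.2 (by omega))]
    exact_mod_cast h
  simp only [Nat.card_eq_fintype_card, Fintype.card_subtype]
  rw [card_filter_and_comp_eq_sum _ (fun p : Fin (n + y) => n ≤ (p : ℕ))
    fun σ : Perm (Fin (n + y)) => σ.symm b, card_filter_le_symm_apply]
  push_cast
  rw [sum_congr rfl fun p hp => hfiber p (mem_filter.1 hp).2,
    sum_fin_filter_le_eq_sum_Icc n y fun k => (n : ℝ) / k * c, ← sum_mul,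
    mul_div_mul_right _ _ hc, one_div_mul_eq_div]
  congr 1
  refine sum_congr rfl fun j hj => ?_
  rw [Nat.cast_sub (by rw [mem_Icc] at hj; omega), Nat.cast_add, Nat.cast_one]
end
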